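/- arXiv:2002.04818 — 6 statements merged into one kernel-verified Lean document; each statement's English description precedes it below -/
import Mathlib

section
/- Let f ∈ K[x_1,...,x_s] and g ∈ K[y_1,...,y_t] be polynomials in disjoint sets of variables, viewed inside S = K[x_1,...,x_s,y_1,...,y_t], and let R, R_1, R_2 be the dual polynomial rings acting by partial differentiation. Then Ann_R(fg) = Ann_{R_1}(f)·R + Ann_{R_2}(g)·R, i.e., the apolar ideal of the product fg is generated by the apolar ideals of f and g in their respective variable sets. -/
/-!
Identify `R = R₁ ⊗ R₂` and `S = S₁ ⊗ S₂` through `MvPolynomial.tensorEquivSum`. Operators in the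
`X`-variables do not see the `y`-variables, so `Φ ⊗ Ψ` applied to `f ⊗ g` is `Φ(f) ⊗ Ψ(g)`: evaluation
at `fg` is the tensor product `A ⊗ B` of the evaluations `A Φ = Φ(f)` and `B Ψ = Ψ(g)`. Over a field
the kernel of `A ⊗ B` is `ker A ⊗ R₂ + R₁ ⊗ ker B`, and the image of this in `R` is the ideal
generated by `Ann(f)` and `Ann(g)`.
-/

open MvPolynomial

/-- The apolar action: `apol Φ f = Φ(∂/∂x₀,…,∂/∂xₙ) f`. -/
noncomputable def apol {σ K : Type*} [CommRing K] (Φ f : MvPolynomial σ K) :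
    MvPolynomial σ K :=
  (AddMonoidAlgebra.coeff Φ).sum fun m c =>
    (AddMonoidAlgebra.coeff f).sum fun n b =>
      if ∀ i ∈ m.support, m i ≤ n i then
        monomial (n - m) (c * b * ∏ i ∈ m.support, (Nat.descFactorial (n i) (m i) : K))
      else 0

open TensorProduct LinearMap

theorem LinearMap.exact_subtype_ker_rangeRestrict {R M N : Type*} [CommRing R]
    [AddCommGroup M] [AddCommGroup N] [Module R M] [Module R N] (f : M →ₗ[R] N) :
    Function.Exact (ker f).subtype f.rangeRestrict := by
  rw [exact_iff, ker_rangeRestrict, Submodule.range_subtype]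

theorem TensorProduct.ker_map_eq_sup {K M₁ M₂ N₁ N₂ : Type*} [Field K]
    [AddCommGroup M₁] [AddCommGroup M₂] [AddCommGroup N₁] [AddCommGroup N₂]
    [Module K M₁] [Module K M₂] [Module K N₁] [Module K N₂]
    (f : M₁ →ₗ[K] N₁) (g : M₂ →ₗ[K] N₂) :
    ker (map f g) = range (rTensor M₂ (ker f).subtype) ⊔ range (lTensor M₁ (ker g).subtype) := by
  -- Factor through the images: tensoring their inclusions stays injective (everything is flat
  -- over a field), and right exactness computes the kernel of the surjective part.
  have hfactor : map f g = map (range f).subtype (range g).subtype ∘ₗ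
      map f.rangeRestrict g.rangeRestrict := by
    rw [← map_comp]; rfl
  have hinj : ker (map (range f).subtype (range g).subtype) = ⊥ :=
    ker_eq_bot.2 (map_injective_of_flat_flat _ _ (range f).injective_subtype
      (range g).injective_subtype)
  rw [hfactor, ker_comp_of_ker_eq_bot _ hinj, sup_comm]
  exact TensorProduct.map_ker f.exact_subtype_ker_rangeRestrict f.surjective_rangeRestrict
    g.exact_subtype_ker_rangeRestrict g.surjective_rangeRestrict

theorem Finsupp.sumElim_tsub_sumElim {σ τ : Type*} (n₁ m₁ : σ →₀ ℕ) (n₂ m₂ : τ →₀ ℕ) :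
    sumElim n₁ n₂ - sumElim m₁ m₂ = sumElim (n₁ - m₁) (n₂ - m₂) := by
  ext (i | j) <;> rfl

namespace MvPolynomial

variable {R σ τ : Type*} [CommRing R]

theorem rename_inl_monomial_mul_rename_inr_monomial (m₁ : σ →₀ ℕ) (m₂ : τ →₀ ℕ) (c₁ c₂ : R) :
    rename Sum.inl (monomial m₁ c₁) * rename Sum.inr (monomial m₂ c₂) =
      monomial (Finsupp.sumElim m₁ m₂) (c₁ * c₂) := by
  rw [rename_monomial, rename_monomial, monomial_mul, Finsupp.sumElim_eq_add]

theorem tensorEquivSum_tmul (a : MvPolynomial σ R) (b : MvPolynomial τ R) :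
    tensorEquivSum R σ τ R (a ⊗ₜ b) = rename Sum.inl a * rename Sum.inr b := by
  have hl : (tensorEquivSum R σ τ R).toAlgHom.comp Algebra.TensorProduct.includeLeft =
      rename Sum.inl := by
    ext i; simp
  have hr : (tensorEquivSum R σ τ R).toAlgHom.comp Algebra.TensorProduct.includeRight =
      rename Sum.inr := by
    ext i; simp
  rw [← hl, ← hr]
  simp [← map_mul]

theorem tensorEquivSum_rTensor_mem_span (P : Submodule R (MvPolynomial σ R))
    (y : P ⊗[R] MvPolynomial τ R) :
    tensorEquivSum R σ τ R (rTensor _ P.subtype y) ∈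
      Ideal.span (rename Sum.inl '' (P : Set (MvPolynomial σ R))) := by
  induction y using TensorProduct.induction_on with
  | zero => simp
  | tmul a b =>
    rw [rTensor_tmul, tensorEquivSum_tmul]
    exact Ideal.mul_mem_right _ _ (Ideal.subset_span ⟨a, a.2, rfl⟩)
  | add y y' hy hy' => rw [map_add, map_add]; exact add_mem hy hy'

theorem tensorEquivSum_lTensor_mem_span (P : Submodule R (MvPolynomial τ R))
    (z : MvPolynomial σ R ⊗[R] P) :
    tensorEquivSum R σ τ R (lTensor _ P.subtype z) ∈
      Ideal.span (rename Sum.inr '' (P : Set (MvPolynomial τ R))) := by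
  induction z using TensorProduct.induction_on with
  | zero => simp
  | tmul a b =>
    rw [lTensor_tmul, tensorEquivSum_tmul]
    exact Ideal.mul_mem_left _ _ (Ideal.subset_span ⟨b, b.2, rfl⟩)
  | add z z' hz hz' => rw [map_add, map_add]; exact add_mem hz hz'

end MvPolynomial

namespace Apolar

section CommRing

variable {K σ τ : Type*} [CommRing K] [Fintype σ] [Fintype τ]

def descFactorialProd (n m : σ →₀ ℕ) : ℕ := ∏ i, (n i).descFactorial (m i)

theorem descFactorialProd_eq_zero {n m : σ →₀ ℕ} (h : ¬ ∀ i ∈ m.support, m i ≤ n i) :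
    descFactorialProd n m = 0 := by
  simp only [not_forall, not_le] at h
  obtain ⟨i, -, hi⟩ := h
  exact Finset.prod_eq_zero (Finset.mem_univ i) (Nat.descFactorial_eq_zero_iff_lt.2 hi)

theorem descFactorialProd_add (n m m' : σ →₀ ℕ) :
    descFactorialProd n (m + m') = descFactorialProd n m' * descFactorialProd (n - m') m := by
  simp only [descFactorialProd, ← Finset.prod_mul_distrib]
  refine Finset.prod_congr rfl fun i _ => ?_
  rw [Finsupp.add_apply, Finsupp.tsub_apply, mul_comm,
    ← Nat.descFactorial_mul_descFactorial (Nat.le_add_left _ _), Nat.add_sub_cancel]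

theorem apol_eq_sum (Φ f : MvPolynomial σ K) :
    apol Φ f = (AddMonoidAlgebra.coeff Φ).sum fun m c => (AddMonoidAlgebra.coeff f).sum
      fun n b => monomial (n - m) (c * b * descFactorialProd n m) := by
  refine Finsupp.sum_congr fun m _ => Finsupp.sum_congr fun n _ => ?_
  split_ifs with h
  · congr 2
    push_cast [descFactorialProd]
    refine Finset.prod_subset (Finset.subset_univ _) fun i _ hi => ?_
    simp [Finsupp.notMem_support_iff.1 hi]
  · simp [descFactorialProd_eq_zero h]

noncomputable def derivOp (m : σ →₀ ℕ) : MvPolynomial σ K →ₗ[K] MvPolynomial σ K :=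
  Finsupp.lsum K (fun n => (descFactorialProd n m : K) • monomial (n - m)) ∘ₗ
    (AddMonoidAlgebra.coeffLinearEquiv K).toLinearMap

noncomputable def apolar : MvPolynomial σ K →ₗ[K] MvPolynomial σ K →ₗ[K] MvPolynomial σ K :=
  Finsupp.lsum K (fun m => LinearMap.toSpanSingleton K _ (derivOp m)) ∘ₗ
    (AddMonoidAlgebra.coeffLinearEquiv K).toLinearMap

theorem apolar_apply (Φ f : MvPolynomial σ K) : apolar Φ f = apol Φ f := by
  rw [apol_eq_sum]
  simp only [apolar, derivOp, LinearMap.comp_apply, LinearEquiv.coe_coe,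
    AddMonoidAlgebra.coeffLinearEquiv_apply, Finsupp.lsum_apply, LinearMap.sum_apply,
    Finsupp.sum, LinearMap.toSpanSingleton_apply, LinearMap.smul_apply,
    Finset.smul_sum, smul_monomial, smul_eq_mul]
  refine Finset.sum_congr rfl fun m _ => Finset.sum_congr rfl fun n _ => ?_
  congr 1
  ring

theorem apolar_monomial (m n : σ →₀ ℕ) (c b : K) :
    apolar (monomial m c) (monomial n b) = monomial (n - m) (c * b * descFactorialProd n m) := by
  rw [apolar_apply, apol_eq_sum, sum_monomial_eq (by simp), sum_monomial_eq (by simp)]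

theorem apolar_mul (Φ Ψ f : MvPolynomial σ K) :
    apolar (Φ * Ψ) f = apolar Φ (apolar Ψ f) := by
  induction Φ using MvPolynomial.induction_on' with
  | add p q hp hq => simp only [add_mul, map_add, LinearMap.add_apply, hp, hq]
  | monomial m c =>
    induction Ψ using MvPolynomial.induction_on' with
    | add p q hp hq => simp only [mul_add, map_add, LinearMap.add_apply, hp, hq]
    | monomial m' c' =>
      induction f using MvPolynomial.induction_on' with
      | add p q hp hq => simp only [map_add, hp, hq]
      | monomial n b =>
        rw [monomial_mul, apolar_monomial, apolar_monomial, apolar_monomial,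
          tsub_add_eq_tsub_tsub_swap, descFactorialProd_add]
        push_cast
        congr 1
        ring

noncomputable def ann (h : MvPolynomial σ K) : Ideal (MvPolynomial σ K) where
  carrier := {Φ | apol Φ h = 0}
  add_mem' {Φ Ψ} hΦ hΨ := by
    simp only [Set.mem_ofPred_eq, ← apolar_apply] at *
    rw [map_add, LinearMap.add_apply, hΦ, hΨ, add_zero]
  zero_mem' := by simp [← apolar_apply]
  smul_mem' Ψ Φ hΦ := by
    simp only [Set.mem_ofPred_eq, smul_eq_mul, ← apolar_apply] at *
    rw [apolar_mul, hΦ, map_zero]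

theorem mem_ann {h Φ : MvPolynomial σ K} : Φ ∈ ann h ↔ apolar Φ h = 0 := by
  rw [apolar_apply]; rfl

theorem descFactorialProd_sumElim (n₁ m₁ : σ →₀ ℕ) (n₂ m₂ : τ →₀ ℕ) :
    descFactorialProd (Finsupp.sumElim n₁ n₂) (Finsupp.sumElim m₁ m₂) =
      descFactorialProd n₁ m₁ * descFactorialProd n₂ m₂ :=
  Fintype.prod_sum_type _

theorem apolar_rename_mul_rename (Φ f : MvPolynomial σ K) (Ψ g : MvPolynomial τ K) :
    apolar (rename Sum.inl Φ * rename Sum.inr Ψ) (rename Sum.inl f * rename Sum.inr g) =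
      rename Sum.inl (apolar Φ f) * rename Sum.inr (apolar Ψ g) := by
  induction Φ using MvPolynomial.induction_on' with
  | add p q hp hq => simp only [map_add, add_mul, LinearMap.add_apply, hp, hq]
  | monomial m₁ c₁ =>
    induction Ψ using MvPolynomial.induction_on' with
    | add p q hp hq => simp only [map_add, mul_add, LinearMap.add_apply, hp, hq]
    | monomial m₂ c₂ =>
      induction f using MvPolynomial.induction_on' with
      | add p q hp hq => simp only [map_add, add_mul, hp, hq]
      | monomial n₁ b₁ =>
        induction g using MvPolynomial.induction_on' with
        | add p q hp hq => simp only [map_add, mul_add, hp, hq]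
        | monomial n₂ b₂ =>
          simp only [rename_inl_monomial_mul_rename_inr_monomial, apolar_monomial,
            Finsupp.sumElim_tsub_sumElim, descFactorialProd_sumElim]
          push_cast
          congr 1
          ring

end CommRing

section Field

variable {K σ τ : Type*} [Field K] [Fintype σ] [Fintype τ]

theorem apolar_flip_comp_tensorEquivSum (f : MvPolynomial σ K) (g : MvPolynomial τ K) :
    apolar.flip (rename Sum.inl f * rename Sum.inr g) ∘ₗ
        (tensorEquivSum K σ τ K).toLinearMap =
      (tensorEquivSum K σ τ K).toLinearMap ∘ₗ map (apolar.flip f) (apolar.flip g) := by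
  refine TensorProduct.ext' fun Φ Ψ => ?_
  simp only [LinearMap.comp_apply, AlgEquiv.toLinearMap_apply, map_tmul, flip_apply,
    tensorEquivSum_tmul, apolar_rename_mul_rename]

theorem ann_rename_mul_rename (f : MvPolynomial σ K) (g : MvPolynomial τ K) :
    ann (rename Sum.inl f * rename Sum.inr g) =
      Ideal.span (rename Sum.inl '' (ann f : Set (MvPolynomial σ K)) ∪
        rename Sum.inr '' (ann g : Set (MvPolynomial τ K))) := by
  refine le_antisymm (fun Φ hΦ => ?_) ?_
  · obtain ⟨x, rfl⟩ := (tensorEquivSum K σ τ K).surjective Φ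
    have hx : x ∈ ker (map (apolar.flip f) (apolar.flip g)) := by
      have := LinearMap.congr_fun (apolar_flip_comp_tensorEquivSum f g) x
      simp only [LinearMap.comp_apply, AlgEquiv.toLinearMap_apply, flip_apply] at this
      rwa [mem_ann.1 hΦ, eq_comm, EmbeddingLike.map_eq_zero_iff] at this
    rw [TensorProduct.ker_map_eq_sup] at hx
    obtain ⟨_, ⟨y, rfl⟩, _, ⟨z, rfl⟩, rfl⟩ := Submodule.mem_sup.1 hx
    rw [map_add]
    refine add_mem (Ideal.span_mono ?_ (tensorEquivSum_rTensor_mem_span _ y))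
      (Ideal.span_mono ?_ (tensorEquivSum_lTensor_mem_span _ z))
    · refine Set.subset_union_of_subset_left (Set.image_mono fun a ha => ?_) _
      exact mem_ann.2 ha
    · refine Set.subset_union_of_subset_right (Set.image_mono fun b hb => ?_) _
      exact mem_ann.2 hb
  · rw [Ideal.span_le]
    rintro _ (⟨Φ, hΦ, rfl⟩ | ⟨Ψ, hΨ, rfl⟩) <;> rw [SetLike.mem_coe, mem_ann]
    · rw [← mul_one (rename Sum.inl Φ), ← map_one (rename Sum.inr), apolar_rename_mul_rename,
        mem_ann.1 hΦ, map_zero, zero_mul]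
    · rw [← one_mul (rename Sum.inr Ψ), ← map_one (rename Sum.inl), apolar_rename_mul_rename,
        mem_ann.1 hΨ, map_zero, mul_zero]

end Field

end Apolar

theorem stmt1_general (K : Type*) [Field K] (s t : ℕ)
    (f : MvPolynomial (Fin s) K) (g : MvPolynomial (Fin t) K) :
    {Φ : MvPolynomial (Fin s ⊕ Fin t) K |
        apol Φ (rename Sum.inl f * rename Sum.inr g) = 0} =
      ↑(Ideal.span
        ((⇑(rename (Sum.inl : Fin s → Fin s ⊕ Fin t)) '' {Φ | apol Φ f = 0}) ∪
         (⇑(rename (Sum.inr : Fin t → Fin s ⊕ Fin t)) '' {Ψ | apol Ψ g = 0}))) :=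
  congrArg SetLike.coe (Apolar.ann_rename_mul_rename f g)

/-- Apolar ideal of a product of polynomials in disjoint variable sets is generated by
the two individual apolar ideals. -/
theorem stmt1 (K : Type*) [Field K] [CharZero K] (s t : ℕ)
    (f : MvPolynomial (Fin s) K) (g : MvPolynomial (Fin t) K) :
    {Φ : MvPolynomial (Fin s ⊕ Fin t) K |
        apol Φ (rename Sum.inl f * rename Sum.inr g) = 0} =
      ↑(Ideal.span
        ((⇑(rename (Sum.inl : Fin s → Fin s ⊕ Fin t)) '' {Φ | apol Φ f = 0}) ∪
         (⇑(rename (Sum.inr : Fin t → Fin s ⊕ Fin t)) '' {Ψ | apol Ψ g = 0}))) :=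
  stmt1_general K s t f g
end

section
/- Let ℓ be a linear form and g a homogeneous polynomial in S = K[x_0,...,x_n], and set f = ℓg. For any homogeneous F ∈ R = K[X_0,...,X_n] of degree d ≥ 1 (identifying the linear form ℓ with the corresponding linear form in R), one has F∘f = (∇F·∇ℓ)∘g + ℓ·(F∘g), where ∇F·∇ℓ is the dot product of the gradient vectors of F and ℓ. -/
/-!
Both sides are bilinear in `F` and `g` and linear in `ℓ`, so it suffices to take `ℓ = x_j`,
`F = X^m` and `g = x^p`. Then `∂^m x^p = p^{(m)} x^(p - m)` with the multi-index falling factorial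
`p^{(m)} = ∏ᵢ pᵢ (pᵢ - 1) ⋯ (pᵢ - mᵢ + 1)`, and the identity becomes the Leibniz rule
`∂^m (x_j g) = m_j ∂^(m - e_j) g + x_j ∂^m g`, i.e. the Pascal-type recursion
`(p + 1)^{(k)} = k p^{(k - 1)} + p^{(k)}` in the `j`-th coordinate.
-/

open MvPolynomial

theorem Nat.succ_descFactorial_eq_add (p k : ℕ) :
    (p + 1).descFactorial k = k * p.descFactorial (k - 1) + p.descFactorial k := by
  cases k with
  | zero => simp
  | succ k =>
    rw [Nat.succ_descFactorial_succ, Nat.descFactorial_succ, Nat.add_sub_cancel]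
    rcases le_or_gt k p with hkp | hpk
    · rw [← add_mul]
      congr 1
      omega
    · simp [Nat.descFactorial_eq_zero_iff_lt.mpr hpk]

section MultiDescFactorial

variable {σ : Type*} [Fintype σ]

def multiDescFactorial (p m : σ →₀ ℕ) : ℕ :=
  ∏ i, (p i).descFactorial (m i)

theorem le_of_multiDescFactorial_ne_zero {p m : σ →₀ ℕ} (h : multiDescFactorial p m ≠ 0) :
    m ≤ p := fun i => by
  by_contra! hi
  exact h (Finset.prod_eq_zero (Finset.mem_univ i) (Nat.descFactorial_eq_zero_iff_lt.mpr hi))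

theorem multiDescFactorial_add_single (p m : σ →₀ ℕ) (j : σ) :
    multiDescFactorial (p + Finsupp.single j 1) m =
      m j * multiDescFactorial p (m - Finsupp.single j 1) + multiDescFactorial p m := by
  classical
  have hsingle (i) (hi : i ∈ ({j}ᶜ : Finset σ)) : Finsupp.single j 1 i = 0 :=
    Finsupp.single_eq_of_ne (by simpa using hi)
  have hp : ∏ i ∈ {j}ᶜ, (p i + Finsupp.single j 1 i).descFactorial (m i) =
      ∏ i ∈ {j}ᶜ, (p i).descFactorial (m i) :=
    Finset.prod_congr rfl fun i hi => by rw [hsingle i hi, add_zero]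
  have hm : ∏ i ∈ {j}ᶜ, (p i).descFactorial (m i - Finsupp.single j 1 i) =
      ∏ i ∈ {j}ᶜ, (p i).descFactorial (m i) :=
    Finset.prod_congr rfl fun i hi => by rw [hsingle i hi, Nat.sub_zero]
  simp only [multiDescFactorial, Fintype.prod_eq_mul_prod_compl j, Finsupp.add_apply,
    Finsupp.tsub_apply, Finsupp.single_eq_same, Nat.succ_descFactorial_eq_add, hp, hm]
  ring

end MultiDescFactorial

section Apolarity

variable {σ K : Type*} [CommRing K]

theorem apol_add_left (Φ Ψ f : MvPolynomial σ K) : apol (Φ + Ψ) f = apol Φ f + apol Ψ f := by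
  unfold apol
  rw [AddMonoidAlgebra.coeff_add]
  refine Finsupp.sum_add_index' (fun m => by simp) fun m c₁ c₂ => ?_
  rw [← Finsupp.sum_add]
  refine Finsupp.sum_congr fun p _ => ?_
  split_ifs
  · rw [← map_add, add_mul, add_mul]
  · rw [add_zero]

theorem apol_add_right (Φ f g : MvPolynomial σ K) : apol Φ (f + g) = apol Φ f + apol Φ g := by
  unfold apol
  rw [AddMonoidAlgebra.coeff_add, ← Finsupp.sum_add]
  refine Finsupp.sum_congr fun m _ => Finsupp.sum_add_index' (fun p => by simp) fun p b₁ b₂ => ?_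
  split_ifs
  · rw [← map_add, mul_add, add_mul]
  · rw [add_zero]

theorem apol_smul_left (r : K) (Φ f : MvPolynomial σ K) : apol (r • Φ) f = r • apol Φ f := by
  unfold apol
  rw [AddMonoidAlgebra.coeff_smul, Finsupp.smul_sum,
    Finsupp.sum_smul_index fun m => by simp]
  refine Finsupp.sum_congr fun m _ => ?_
  rw [Finsupp.smul_sum]
  refine Finsupp.sum_congr fun p _ => ?_
  split_ifs
  · rw [smul_monomial, smul_eq_mul]
    congr 1
    ring
  · rw [smul_zero]

theorem apol_smul_right (r : K) (Φ f : MvPolynomial σ K) : apol Φ (r • f) = r • apol Φ f := by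
  unfold apol
  rw [AddMonoidAlgebra.coeff_smul, Finsupp.smul_sum]
  refine Finsupp.sum_congr fun m _ => ?_
  rw [Finsupp.sum_smul_index fun p => by simp, Finsupp.smul_sum]
  refine Finsupp.sum_congr fun p _ => ?_
  split_ifs
  · rw [smul_monomial, smul_eq_mul]
    congr 1
    ring
  · rw [smul_zero]

variable (σ K) in
noncomputable def apolBilin : MvPolynomial σ K →ₗ[K] MvPolynomial σ K →ₗ[K] MvPolynomial σ K :=
  LinearMap.mk₂ K apol apol_add_left apol_smul_left apol_add_right apol_smul_right

theorem apolBilin_apply (Φ f : MvPolynomial σ K) : apolBilin σ K Φ f = apol Φ f := rfl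

theorem apol_monomial_monomial [Fintype σ] (m p : σ →₀ ℕ) (c b : K) :
    apol (monomial m c) (monomial p b) = monomial (p - m) (c * b * multiDescFactorial p m) := by
  have hprod : ∏ i ∈ m.support, ((p i).descFactorial (m i) : K) = multiDescFactorial p m := by
    rw [multiDescFactorial, Nat.cast_prod]
    exact Finset.prod_subset (Finset.subset_univ _) fun i _ hi => by
      simp [Finsupp.notMem_support_iff.mp hi]
  unfold apol
  rw [sum_monomial_eq (by simp), sum_monomial_eq (by simp), hprod]
  split_ifs with hle
  · rfl
  · push Not at hle
    obtain ⟨i, -, hi⟩ := hle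
    rw [multiDescFactorial, Finset.prod_eq_zero (Finset.mem_univ i)
      (Nat.descFactorial_eq_zero_iff_lt.mpr hi)]
    simp

theorem apol_monomial_X_mul_monomial [Fintype σ] (m p : σ →₀ ℕ) (c b : K) (j : σ) :
    apol (monomial m c) (X j * monomial p b) =
      apol (pderiv j (monomial m c)) (monomial p b) + X j * apol (monomial m c) (monomial p b) := by
  rw [X, monomial_mul, one_mul, add_comm _ p, pderiv_monomial, apol_monomial_monomial,
    apol_monomial_monomial, apol_monomial_monomial, monomial_mul, one_mul,
    multiDescFactorial_add_single]
  push_cast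
  rw [mul_add, map_add]
  -- the truncated exponents agree except where the coefficient vanishes (`m j = 0`, `¬ m ≤ p`)
  congr 1
  · rcases eq_or_ne (m j) 0 with hmj | hmj
    · simp [hmj]
    · have hem : Finsupp.single j 1 ≤ m :=
        Finsupp.single_le_iff.mpr (Nat.one_le_iff_ne_zero.mpr hmj)
      rw [← tsub_tsub_eq_add_tsub_of_le hem]
      congr 1
      ring
  · by_cases hmp : m ≤ p
    · rw [add_comm _ (p - m), tsub_add_eq_add_tsub hmp]
    · rw [Nat.eq_zero_of_not_pos (mt (fun h => le_of_multiDescFactorial_ne_zero h.ne') hmp)]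
      simp

theorem apol_X_mul [Fintype σ] (F g : MvPolynomial σ K) (j : σ) :
    apol F (X j * g) = apol (pderiv j F) g + X j * apol F g := by
  induction F using MvPolynomial.induction_on' with
  | monomial m c =>
    induction g using MvPolynomial.induction_on' with
    | monomial p b => exact apol_monomial_X_mul_monomial m p c b j
    | add f₁ f₂ ih₁ ih₂ =>
      rw [mul_add, apol_add_right, apol_add_right, apol_add_right, ih₁, ih₂, mul_add]
      ring
  | add Φ Ψ ih₁ ih₂ =>
    rw [apol_add_left, apol_add_left, map_add, apol_add_left, ih₁, ih₂]
    ring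

end Apolarity

theorem stmt3_general (K : Type*) [Field K] (n : ℕ)
    (a : Fin (n + 1) → K) (g F : MvPolynomial (Fin (n + 1)) K) :
    apol F ((∑ i, C (a i) * X i) * g) =
      apol (∑ i, C (a i) * pderiv i F) g + (∑ i, C (a i) * X i) * apol F g := by
  simp only [← smul_eq_C_mul, ← apolBilin_apply, Finset.sum_mul, smul_mul_assoc, map_sum,
    map_smul, LinearMap.sum_apply, LinearMap.smul_apply]
  simp only [apolBilin_apply, apol_X_mul, smul_add, Finset.sum_add_distrib]

/-- `F ∘ (ℓ g) = (∇F·∇ℓ) ∘ g + ℓ (F ∘ g)` for a linear form `ℓ = ∑ aᵢ xᵢ`. -/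
theorem stmt3 (K : Type*) [Field K] [CharZero K] (n : ℕ)
    (a : Fin (n + 1) → K) (g F : MvPolynomial (Fin (n + 1)) K)
    (e d : ℕ) (hg : g.IsHomogeneous e) (hF : F.IsHomogeneous d) (hd : 1 ≤ d) :
    apol F ((∑ i, C (a i) * X i) * g) =
      apol (∑ i, C (a i) * pderiv i F) g + (∑ i, C (a i) * X i) * apol F g :=
  stmt3_general K n a g F
end

section
/- Let h ∈ S be homogeneous and g ∈ S homogeneous, and set f = gh. Let I = Ann_R(h) and I' = Ann_R(f). If D ∈ R is homogeneous of degree k with D∘f = 0 but D∘h ≠ 0, then g ∈ (J^{k-1}(h) : (D∘h)), where J^{k-1}(h) is the ideal generated by all partial derivatives of h of order k−1. -/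
/-!
Iterating the Leibniz rule `∂ᵢ (g q) = ∂ᵢ g · q + g · ∂ᵢ q` shows that for every monomial operator
`X^m` of degree `k`, `X^m ∘ (g h) - g (X^m ∘ h)` lies in the ideal generated by the partial
derivatives of `h` of order `< k`; hence so does `g (D ∘ h) = -(D ∘ (g h) - g (D ∘ h))`.
In characteristic zero, Euler's identity `(e - j) p = ∑ xᵢ ∂ᵢ p` for a derivative `p` of order
`j < e = deg h` pushes each of these derivatives into `J^{j+1}(h)`, hence into `J^{k-1}(h)`;
here `k ≤ e` because `D ∘ h ≠ 0`.
-/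

open MvPolynomial

/-- The `j`-th order Jacobian ideal: generated by all order-`j` partial derivatives. -/
noncomputable def jacIdeal {σ K : Type*} [CommRing K] (j : ℕ) (h : MvPolynomial σ K) :
    Ideal (MvPolynomial σ K) :=
  Ideal.span {p | ∃ m : σ →₀ ℕ, (m.sum fun _ e => e) = j ∧ p = apol (monomial m 1) h}

namespace Finsupp

variable {σ : Type*}

@[elab_as_elim]
theorem induction_add_single_one {motive : (σ →₀ ℕ) → Prop} (m : σ →₀ ℕ) (zero : motive 0)
    (add_single_one : ∀ m i, motive m → motive (m + single i 1)) : motive m := by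
  induction m using Finsupp.induction₂ with
  | zero => exact zero
  | add_single i b m _ _ ih =>
    have add_single : ∀ b : ℕ, motive (m + single i b) := fun b => by
      induction b with
      | zero => simpa using ih
      | succ b ihb => rw [single_add, ← add_assoc]; exact add_single_one _ _ ihb
    exact add_single b

theorem prod_descFactorial_add_single {K : Type*} [CommSemiring K] (n m : σ →₀ ℕ) (i : σ) :
    ∏ j ∈ (m + single i 1).support, ((n j).descFactorial ((m + single i 1 : σ →₀ ℕ) j) : K) =
      ((n i - m i : ℕ) : K) * ∏ j ∈ m.support, ((n j).descFactorial (m j) : K) := by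
  classical
  have hg : ∀ j, ((n j).descFactorial 0 : K) = 1 := fun j => by simp
  change (m + single i 1).prod (fun j k => ((n j).descFactorial k : K)) =
    _ * m.prod (fun j k => ((n j).descFactorial k : K))
  rw [← mul_prod_erase' _ i _ hg, ← mul_prod_erase' m i _ hg, erase_add,
    erase_single, add_zero, add_apply, single_eq_same, Nat.descFactorial_succ, Nat.cast_mul,
    mul_assoc]

end Finsupp

open Finsupp (single)

section Apolar

variable {σ K : Type*} [CommRing K]

theorem apol_monomial (m : σ →₀ ℕ) (c : K) (f : MvPolynomial σ K) :
    apol (monomial m c) f = ∑ n ∈ f.support,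
      monomial (n - m) (c * coeff n f * ∏ j ∈ m.support, ((n j).descFactorial (m j) : K)) := by
  rw [apol, ← single_eq_monomial, AddMonoidAlgebra.coeff_single, Finsupp.sum_single_index]
  · refine Finset.sum_congr rfl fun n _ => ?_
    dsimp only
    split_ifs with hmn
    · rfl
    · push Not at hmn
      obtain ⟨j, hj, hlt⟩ := hmn
      rw [Finset.prod_eq_zero hj (by simp [Nat.descFactorial_eq_zero_iff_lt.2 hlt]), mul_zero,
        monomial_zero]
  · simp [Finsupp.sum]

theorem apol_monomial_zero_one (f : MvPolynomial σ K) : apol (monomial 0 1) f = f := by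
  rw [apol_monomial]
  simp only [tsub_zero, Finsupp.support_zero, Finset.prod_empty, one_mul, mul_one]
  exact support_sum_monomial_coeff f

theorem apol_eq_sum (Φ f : MvPolynomial σ K) :
    apol Φ f = ∑ m ∈ Φ.support, coeff m Φ • apol (monomial m 1) f := by
  have hΦ : apol Φ f = ∑ m ∈ Φ.support, apol (monomial m (coeff m Φ)) f := by
    conv_rhs =>
      arg 2; ext m
      rw [apol, ← single_eq_monomial, AddMonoidAlgebra.coeff_single,
        Finsupp.sum_single_index (by simp [Finsupp.sum])]
    rfl
  simp only [hΦ, apol_monomial, Finset.smul_sum, smul_monomial, smul_eq_mul, one_mul, mul_assoc]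

theorem pderiv_apol_monomial (i : σ) (m : σ →₀ ℕ) (f : MvPolynomial σ K) :
    pderiv i (apol (monomial m 1) f) = apol (monomial (m + single i 1) 1) f := by
  simp only [apol_monomial, map_sum, pderiv_monomial, tsub_tsub, Finsupp.tsub_apply,
    Finsupp.prod_descFactorial_add_single]
  exact Finset.sum_congr rfl fun n _ => by ring_nf

theorem MvPolynomial.IsHomogeneous.apol_monomial {h : MvPolynomial σ K} {e : ℕ}
    (hh : h.IsHomogeneous e) (m : σ →₀ ℕ) :
    (apol (monomial m 1) h).IsHomogeneous (e - m.degree) := by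
  induction m using Finsupp.induction_add_single_one with
  | zero => rwa [apol_monomial_zero_one, map_zero, Nat.sub_zero]
  | add_single_one m i ih =>
    rw [← pderiv_apol_monomial, map_add, Finsupp.degree_single, ← Nat.sub_sub]
    exact ih.pderiv

theorem apol_monomial_eq_zero_of_lt {h : MvPolynomial σ K} {e : ℕ} (hh : h.IsHomogeneous e)
    {m : σ →₀ ℕ} (hm : e < m.degree) : apol (monomial m 1) h = 0 := by
  refine (apol_monomial m 1 h).trans (Finset.sum_eq_zero fun n hn => ?_)
  have hn : n.degree = e := (hh.degree_eq_sum_deg_support hn).symm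
  have hnm : ¬ m ≤ n := fun hle => (Finsupp.degree_mono hle).not_gt (hn ▸ hm)
  obtain ⟨j, hlt⟩ : ∃ j, n j < m j := by simpa [Finsupp.le_def] using hnm
  rw [Finset.prod_eq_zero (i := j) (Finsupp.mem_support_iff.2 (by omega))
    (by simp [Nat.descFactorial_eq_zero_iff_lt.2 hlt]), mul_zero, monomial_zero]

theorem apol_eq_zero_of_lt {D h : MvPolynomial σ K} {k e : ℕ} (hD : D.IsHomogeneous k)
    (hh : h.IsHomogeneous e) (hek : e < k) : apol D h = 0 := by
  rw [apol_eq_sum]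
  refine Finset.sum_eq_zero fun m hm => ?_
  have hm : m.degree = k := (hD.degree_eq_sum_deg_support hm).symm
  rw [apol_monomial_eq_zero_of_lt hh (hm ▸ hek), smul_zero]

end Apolar

section LowerJacobian

variable {σ K : Type*} [CommRing K]

theorem apol_monomial_mem_jacIdeal (m : σ →₀ ℕ) (h : MvPolynomial σ K) :
    apol (monomial m 1) h ∈ jacIdeal m.degree h :=
  Ideal.subset_span ⟨m, rfl, rfl⟩

noncomputable def lowerJacIdeal (j : ℕ) (h : MvPolynomial σ K) : Ideal (MvPolynomial σ K) :=
  Ideal.span {p | ∃ m : σ →₀ ℕ, m.degree < j ∧ p = apol (monomial m 1) h}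

theorem apol_monomial_mem_lowerJacIdeal {j : ℕ} {m : σ →₀ ℕ} (h : MvPolynomial σ K)
    (hm : m.degree < j) : apol (monomial m 1) h ∈ lowerJacIdeal j h :=
  Ideal.subset_span ⟨m, hm, rfl⟩

theorem lowerJacIdeal_mono {i j : ℕ} (hij : i ≤ j) (h : MvPolynomial σ K) :
    lowerJacIdeal i h ≤ lowerJacIdeal j h :=
  Ideal.span_mono fun _ ⟨m, hm, hp⟩ => ⟨m, hm.trans_le hij, hp⟩

theorem pderiv_mem_lowerJacIdeal_succ {j : ℕ} {h p : MvPolynomial σ K} (i : σ)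
    (hp : p ∈ lowerJacIdeal j h) : pderiv i p ∈ lowerJacIdeal (j + 1) h := by
  induction hp using Submodule.span_induction with
  | mem _ hp =>
    obtain ⟨m, hm, rfl⟩ := hp
    rw [pderiv_apol_monomial]
    exact apol_monomial_mem_lowerJacIdeal h (by simpa using hm)
  | zero => simp
  | add _ _ _ _ hx hy => simpa using add_mem hx hy
  | smul _ _ hx ihx =>
    rw [smul_eq_mul, pderiv_mul]
    exact add_mem (Ideal.mul_mem_left _ _ (lowerJacIdeal_mono j.le_succ h hx))
      (Ideal.mul_mem_left _ _ ihx)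

theorem apol_monomial_mul_sub_mem_lowerJacIdeal (g h : MvPolynomial σ K) (m : σ →₀ ℕ) :
    apol (monomial m 1) (g * h) - g * apol (monomial m 1) h ∈ lowerJacIdeal m.degree h := by
  induction m using Finsupp.induction_add_single_one with
  | zero => simp only [apol_monomial_zero_one, sub_self, zero_mem]
  | add_single_one m i ih =>
    have hleib : apol (monomial (m + single i 1) 1) (g * h)
        - g * apol (monomial (m + single i 1) 1) h
        = pderiv i g * apol (monomial m 1) h
          + pderiv i (apol (monomial m 1) (g * h) - g * apol (monomial m 1) h) := by
      simp only [← pderiv_apol_monomial, map_sub, pderiv_mul]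
      ring
    rw [hleib, map_add, Finsupp.degree_single]
    exact add_mem (Ideal.mul_mem_left _ _ (apol_monomial_mem_lowerJacIdeal h (lt_add_one _)))
      (pderiv_mem_lowerJacIdeal_succ i ih)

theorem apol_mul_sub_mem_lowerJacIdeal {D : MvPolynomial σ K} {k : ℕ} (hD : D.IsHomogeneous k)
    (g h : MvPolynomial σ K) : apol D (g * h) - g * apol D h ∈ lowerJacIdeal k h := by
  rw [apol_eq_sum D, apol_eq_sum D h, Finset.mul_sum, ← Finset.sum_sub_distrib]
  refine sum_mem fun m hm => ?_
  have hm : m.degree = k := (hD.degree_eq_sum_deg_support hm).symm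
  rw [mul_smul_comm, ← smul_sub]
  exact Submodule.smul_of_tower_mem _ _ (hm ▸ apol_monomial_mul_sub_mem_lowerJacIdeal g h m)

end LowerJacobian

section Euler

variable {σ K : Type*} [Fintype σ] [Field K] [CharZero K]

theorem jacIdeal_le_jacIdeal_succ {h : MvPolynomial σ K} {e j : ℕ} (hh : h.IsHomogeneous e)
    (hj : j < e) : jacIdeal j h ≤ jacIdeal (j + 1) h := by
  refine Ideal.span_le.2 ?_
  rintro _ ⟨m, hm, rfl⟩
  replace hm : m.degree = j := hm
  have hc : ((e - j : ℕ) : K) ≠ 0 := Nat.cast_ne_zero.2 (Nat.sub_ne_zero_of_lt hj)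
  have hsmul : ((e - j : ℕ) : K) • apol (monomial m 1) h ∈ jacIdeal (j + 1) h := by
    rw [Nat.cast_smul_eq_nsmul, ← hm, ← (hh.apol_monomial m).sum_X_mul_pderiv]
    refine sum_mem fun i _ => Ideal.mul_mem_left _ _ ?_
    have hmi := apol_monomial_mem_jacIdeal (m + single i 1) h
    rwa [map_add, Finsupp.degree_single, ← pderiv_apol_monomial] at hmi
  simpa [hc] using Submodule.smul_of_tower_mem _ ((e - j : ℕ) : K)⁻¹ hsmul

theorem jacIdeal_mono {h : MvPolynomial σ K} {e i j : ℕ} (hh : h.IsHomogeneous e) (hij : i ≤ j)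
    (hje : j ≤ e) : jacIdeal i h ≤ jacIdeal j h := by
  induction j, hij using Nat.le_induction with
  | base => exact le_rfl
  | succ j _ ih => exact (ih (by omega)).trans (jacIdeal_le_jacIdeal_succ hh (by omega))

theorem lowerJacIdeal_le_jacIdeal {h : MvPolynomial σ K} {e k : ℕ} (hh : h.IsHomogeneous e)
    (hke : k ≤ e) : lowerJacIdeal k h ≤ jacIdeal (k - 1) h := by
  refine Ideal.span_le.2 ?_
  rintro _ ⟨m, hm, rfl⟩
  exact jacIdeal_mono hh (by omega) (by omega) (apol_monomial_mem_jacIdeal m h)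

end Euler

theorem stmt5_general (K : Type*) [Field K] [CharZero K] (n : ℕ)
    (g h : MvPolynomial (Fin (n + 1)) K) (e : ℕ)
    (hh : h.IsHomogeneous e)
    (D : MvPolynomial (Fin (n + 1)) K) (k : ℕ) (hD : D.IsHomogeneous k)
    (hDf : apol D (g * h) = 0) (hDh : apol D h ≠ 0) :
    g * apol D h ∈ jacIdeal (k - 1) h := by
  have hke : k ≤ e := by
    by_contra! hek
    exact hDh (apol_eq_zero_of_lt hD hh hek)
  have hmem := apol_mul_sub_mem_lowerJacIdeal hD g h
  rw [hDf, zero_sub, neg_mem_iff] at hmem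
  exact lowerJacIdeal_le_jacIdeal hh hke hmem

/-- If `D` is homogeneous of degree `k`, `D∘(gh) = 0` and `D∘h ≠ 0`, then
`g ∈ (J^{k-1}(h) : (D∘h))`, i.e. `g·(D∘h) ∈ J^{k-1}(h)`. -/
theorem stmt5 (K : Type*) [Field K] [CharZero K] (n : ℕ)
    (g h : MvPolynomial (Fin (n + 1)) K) (e e' : ℕ)
    (hh : h.IsHomogeneous e) (hg : g.IsHomogeneous e')
    (D : MvPolynomial (Fin (n + 1)) K) (k : ℕ) (hD : D.IsHomogeneous k)
    (hDf : apol D (g * h) = 0) (hDh : apol D h ≠ 0) :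
    g * apol D h ∈ jacIdeal (k - 1) h :=
  stmt5_general K n g h e hh D k hD hDf hDh
end

section
/- Suppose f ∈ K[x_0,...,x_n] is a product of at least n+2 distinct linear forms defining a generic arrangement A in P^n. Factor f = gh with g, h products of these linear forms and deg(h) ≥ n+1. If the apolar ideal Ann_R(h) contains no nonzero element of degree k for some k ≤ n, then Ann_R(f) contains no nonzero element of degree k. -/
/-!
A homogeneous operator `D` of degree `k` applied to a product of linear forms `ℓ_j`, `j ∈ U`,
expands by the Leibniz rule as `D(∏_U ℓ_j) = ∑_{|S| = k} D(∏_S ℓ_j) · ∏_{U \ S} ℓ_j`, and each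
`D(∏_S ℓ_j)` is a constant `c_S`. If `D` kills `f = ∏ ℓ_j`, evaluating this expansion at a point
lying on the hyperplanes `ℓ_j = 0` for `j ∈ S` and on no other hyperplane of the arrangement gives
`c_S = 0`; such a point exists because the arrangement is generic and `|S| = k ≤ n`. With all
`c_S = 0`, the same expansion for `h` gives `D(h) = 0`, hence `D = 0`.
-/

open MvPolynomial

theorem Derivation.leibniz_finsetProd {R A M ι : Type*} [CommSemiring R] [CommSemiring A]
    [Algebra R A] [AddCommMonoid M] [Module A M] [Module R M] [DecidableEq ι]
    (D : Derivation R A M) (s : Finset ι) (f : ι → A) :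
    D (∏ j ∈ s, f j) = ∑ j ∈ s, (∏ j' ∈ s.erase j, f j') • D (f j) := by
  induction s using Finset.induction with
  | empty => simp
  | insert x s hx ih =>
    rw [Finset.prod_insert hx, Derivation.leibniz, ih, Finset.sum_insert hx, Finset.erase_insert hx,
      Finset.smul_sum, add_comm]
    congr 1
    refine Finset.sum_congr rfl fun j hj => ?_
    rw [Finset.erase_insert_of_ne (ne_of_mem_of_not_mem hj hx).symm,
      Finset.prod_insert fun h => hx (Finset.mem_of_mem_erase h), mul_smul]

@[elab_as_elim]
theorem Finsupp.induction_add_single {σ : Type*} {motive : (σ →₀ ℕ) → Prop} (m : σ →₀ ℕ)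
    (zero : motive 0) (add_single : ∀ m i, motive m → motive (m + Finsupp.single i 1)) :
    motive m := by
  induction m using Finsupp.induction with
  | zero => exact zero
  | single_add i b f _ hb ih =>
    clear hb
    induction b with
    | zero => simpa using ih
    | succ b ihb => rw [Finsupp.single_add, add_right_comm]; exact add_single _ i ihb

theorem Finset.sum_sum_powersetCard_erase {ι M : Type*} [DecidableEq ι] [AddCommMonoid M]
    (U : Finset ι) (k : ℕ) (G : ι → Finset ι → M) :
    ∑ j ∈ U, ∑ S ∈ (U.erase j).powersetCard k, G j S =
      ∑ S ∈ U.powersetCard (k + 1), ∑ j ∈ S, G j (S.erase j) := by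
  rw [Finset.sum_sigma', Finset.sum_sigma']
  refine Finset.sum_bij' (fun p _ => ⟨insert p.1 p.2, p.1⟩) (fun q _ => ⟨q.2, q.1.erase q.2⟩)
    ?_ ?_ ?_ ?_ ?_
  all_goals
    rintro ⟨j, S⟩ h
    simp only [Finset.mem_sigma, Finset.mem_powersetCard] at h ⊢
  all_goals grind [Finset.erase_insert, Finset.insert_erase]

theorem prod_descFactorial_add_single {σ : Type*} [DecidableEq σ] {m n : σ →₀ ℕ} {i : σ}
    (hi : n i ≠ 0) :
    ∏ j ∈ (m + Finsupp.single i 1).support,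
        (n j).descFactorial ((m + Finsupp.single i 1 : σ →₀ ℕ) j) =
      n i * ∏ j ∈ m.support, ((n - Finsupp.single i 1 : σ →₀ ℕ) j).descFactorial (m j) := by
  have hsub : (m + Finsupp.single i 1).support ⊆ insert i m.support := by
    intro j hj
    by_cases hji : j = i <;> simp_all
  rw [Finset.prod_subset hsub fun j _ hj => by rw [Finsupp.notMem_support_iff.mp hj]; rfl,
    Finset.prod_subset (Finset.subset_insert i m.support) fun j _ hj => by
      rw [Finsupp.notMem_support_iff.mp hj]; rfl,
    ← Finset.mul_prod_erase _ _ (Finset.mem_insert_self _ _),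
    ← Finset.mul_prod_erase _ _ (Finset.mem_insert_self _ _), ← mul_assoc]
  obtain ⟨t, ht⟩ : ∃ t, n i = t + 1 := Nat.exists_eq_add_one.mpr (Nat.pos_of_ne_zero hi)
  congr 1
  · simp only [Finsupp.add_apply, Finsupp.tsub_apply, Finsupp.single_eq_same, ht,
      Nat.add_sub_cancel, Nat.succ_descFactorial_succ]
  · refine Finset.prod_congr rfl fun j hj => ?_
    simp [Ne.symm (Finset.ne_of_mem_erase hj)]

section Apolar

variable {σ K : Type*} [CommRing K]

/-- `apolTerm m c` is the operator `c ∂^m`, the contribution of the term `c X^m` of `Φ` to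
`apol Φ`. -/
noncomputable def apolTerm (m : σ →₀ ℕ) (c : K) : MvPolynomial σ K →ₗ[K] MvPolynomial σ K where
  toFun f := (AddMonoidAlgebra.coeff f).sum fun n b =>
    if ∀ i ∈ m.support, m i ≤ n i then
      monomial (n - m) (c * b * ∏ i ∈ m.support, (Nat.descFactorial (n i) (m i) : K))
    else 0
  map_add' f g := Finsupp.sum_add_index' (fun _ => by simp)
    fun _ _ _ => by split_ifs <;> simp [mul_add, add_mul]
  map_smul' e f := by
    refine (Finsupp.sum_smul_index' fun _ => by simp).trans ?_
    rw [Finsupp.smul_sum]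
    refine Finsupp.sum_congr fun n _ => ?_
    split_ifs
    · simp only [smul_monomial, smul_eq_mul, RingHom.id_apply]
      congr 1
      ring
    · simp

theorem apol_eq_sum_apolTerm (Φ f : MvPolynomial σ K) :
    apol Φ f = ∑ m ∈ Φ.support, apolTerm m (coeff m Φ) f := rfl

theorem apolTerm_monomial (m : σ →₀ ℕ) (c : K) (n : σ →₀ ℕ) (b : K) :
    apolTerm m c (monomial n b) =
      if m ≤ n then monomial (n - m) (c * b * ∏ i ∈ m.support, ((n i).descFactorial (m i) : K))
      else 0 := by
  change (Finsupp.single n b).sum (fun n b => if ∀ i ∈ m.support, m i ≤ n i then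
      monomial (n - m) (c * b * ∏ i ∈ m.support, ((n i).descFactorial (m i) : K)) else 0) = _
  simp only [Finsupp.le_iff]
  exact Finsupp.sum_single_index (by simp)

theorem apolTerm_zero (c : K) (f : MvPolynomial σ K) : apolTerm 0 c f = c • f := by
  induction f using MvPolynomial.induction_on' with
  | monomial n b => simp [apolTerm_monomial, smul_monomial]
  | add f g hf hg => simp [hf, hg]

theorem apolTerm_add_single (m : σ →₀ ℕ) (i : σ) (c : K) (f : MvPolynomial σ K) :
    apolTerm (m + Finsupp.single i 1) c f = apolTerm m c (pderiv i f) := by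
  classical
  induction f using MvPolynomial.induction_on' with
  | add f g hf hg => simp only [map_add, hf, hg]
  | monomial n b =>
    rw [pderiv_monomial, apolTerm_monomial, apolTerm_monomial]
    by_cases hi : n i = 0
    · have : ¬ m + Finsupp.single i 1 ≤ n := fun h => by simpa [hi] using h i
      simp [hi, this]
    · have hle : Finsupp.single i 1 ≤ n := by
        simpa [Finsupp.single_le_iff, Nat.one_le_iff_ne_zero] using hi
      simp only [← le_tsub_iff_right hle, tsub_add_eq_tsub_tsub_swap]
      split_ifs
      · rw [← Nat.cast_prod, ← Nat.cast_prod, prod_descFactorial_add_single hi]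
        push_cast
        congr 1
        ring
      · rfl

theorem MvPolynomial.IsHomogeneous.apolTerm {d : ℕ} {f : MvPolynomial σ K} (hf : f.IsHomogeneous d)
    (m : σ →₀ ℕ) (c : K) : (apolTerm m c f).IsHomogeneous (d - m.degree) := by
  rw [f.as_sum, map_sum]
  refine IsHomogeneous.sum _ _ _ fun n hn => ?_
  rw [apolTerm_monomial]
  split_ifs with hmn
  · apply isHomogeneous_monomial
    have hn : n.degree = d := by
      rw [Finsupp.degree_eq_weight_one]
      exact hf (mem_support_iff.mp hn)
    have := congrArg Finsupp.degree (tsub_add_cancel_of_le hmn)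
    rw [map_add] at this
    omega
  · exact isHomogeneous_zero _ _ _

theorem MvPolynomial.IsHomogeneous.apol {k d : ℕ} {Φ f : MvPolynomial σ K}
    (hΦ : Φ.IsHomogeneous k) (hf : f.IsHomogeneous d) : (apol Φ f).IsHomogeneous (d - k) := by
  rw [apol_eq_sum_apolTerm]
  refine IsHomogeneous.sum _ _ _ fun m hm => ?_
  have hm : m.degree = k := by
    rw [Finsupp.degree_eq_weight_one]
    exact hΦ (mem_support_iff.mp hm)
  simpa [hm] using hf.apolTerm m (coeff m Φ)

end Apolar

section LinearForms

variable {σ ι K : Type*} [Fintype σ] [CommRing K]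

noncomputable def linearForm (v : σ → K) : MvPolynomial σ K := ∑ i, C (v i) * X i

theorem isHomogeneous_linearForm (v : σ → K) : (linearForm v).IsHomogeneous 1 :=
  IsHomogeneous.sum _ _ _ fun _ _ => isHomogeneous_C_mul_X _ _

theorem pderiv_linearForm (v : σ → K) (i : σ) : pderiv i (linearForm v) = C (v i) := by
  classical
  simp [linearForm, pderiv_X, Pi.single_apply]

theorem eval_linearForm (v p : σ → K) : eval p (linearForm v) = v ⬝ᵥ p := by
  simp [linearForm, dotProduct]

theorem isHomogeneous_prod_linearForm (a : ι → σ → K) (S : Finset ι) :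
    (∏ j ∈ S, linearForm (a j)).IsHomogeneous S.card := by
  simpa using IsHomogeneous.prod S _ (fun _ => 1) fun j _ => isHomogeneous_linearForm (a j)

variable [DecidableEq ι] (a : ι → σ → K)

theorem pderiv_prod_linearForm (i : σ) (U : Finset ι) :
    pderiv i (∏ j ∈ U, linearForm (a j)) =
      ∑ j ∈ U, a j i • ∏ j' ∈ U.erase j, linearForm (a j') := by
  simp [Derivation.leibniz_finsetProd, pderiv_linearForm, smul_eq_C_mul, mul_comm]

theorem apolTerm_prod_linearForm (m : σ →₀ ℕ) (c : K) (U : Finset ι) :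
    apolTerm m c (∏ j ∈ U, linearForm (a j)) =
      ∑ S ∈ U.powersetCard m.degree,
        apolTerm m c (∏ j ∈ S, linearForm (a j)) * ∏ j ∈ U \ S, linearForm (a j) := by
  induction m using Finsupp.induction_add_single generalizing U with
  | zero => simp [apolTerm_zero]
  | add_single m i ih =>
    rw [map_add, Finsupp.degree_single]
    calc apolTerm (m + Finsupp.single i 1) c (∏ j ∈ U, linearForm (a j))
        = ∑ j ∈ U, ∑ S ∈ (U.erase j).powersetCard m.degree,
            a j i • (apolTerm m c (∏ j' ∈ S, linearForm (a j')) *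
              ∏ j' ∈ U \ insert j S, linearForm (a j')) := by
          simp only [apolTerm_add_single, pderiv_prod_linearForm, map_sum, map_smul]
          refine Finset.sum_congr rfl fun j _ => ?_
          rw [ih, Finset.smul_sum]
          simp only [Finset.sdiff_insert, Finset.erase_sdiff_comm]
      _ = _ := by
          rw [Finset.sum_sum_powersetCard_erase]
          refine Finset.sum_congr rfl fun S hS => ?_
          simp only [apolTerm_add_single, pderiv_prod_linearForm, map_sum, map_smul,
            Finset.sum_mul, smul_mul_assoc]
          refine Finset.sum_congr rfl fun j hj => ?_
          rw [Finset.insert_erase hj]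

theorem apol_prod_linearForm {k : ℕ} {D : MvPolynomial σ K} (hD : D.IsHomogeneous k)
    (U : Finset ι) :
    apol D (∏ j ∈ U, linearForm (a j)) =
      ∑ S ∈ U.powersetCard k,
        apol D (∏ j ∈ S, linearForm (a j)) * ∏ j ∈ U \ S, linearForm (a j) := by
  simp only [apol_eq_sum_apolTerm, Finset.sum_mul]
  rw [Finset.sum_comm]
  refine Finset.sum_congr rfl fun m hm => ?_
  have hm : m.degree = k := by
    rw [Finsupp.degree_eq_weight_one]
    exact hD (mem_support_iff.mp hm)
  rw [apolTerm_prod_linearForm, hm]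

end LinearForms

theorem Submodule.exists_dual_le_ker_forall_ne_zero {K V : Type*} [Field K] [Infinite K]
    [AddCommGroup V] [Module K V] (p : Submodule K V) (s : Finset V) (hs : ∀ x ∈ s, x ∉ p) :
    ∃ f : Module.Dual K V, p ≤ LinearMap.ker f ∧ ∀ x ∈ s, f x ≠ 0 := by
  -- The functionals vanishing on `p` would otherwise be covered by the finitely many proper
  -- subspaces `{f | f x = 0}`, `x ∈ s`, which is impossible over an infinite field.
  by_contra! h
  let H : s → Subspace K p.dualAnnihilator := fun x =>
    LinearMap.ker ((Module.Dual.eval K V x).comp p.dualAnnihilator.subtype)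
  obtain ⟨x, hx⟩ := Subspace.exists_eq_top_of_iUnion_eq_univ (p := H) <| by
    refine Set.eq_univ_of_forall fun f => ?_
    obtain ⟨x, hxs, hfx⟩ := h f fun w hw => (Submodule.mem_dualAnnihilator _).mp f.2 w hw
    exact Set.mem_iUnion.mpr ⟨⟨x, hxs⟩, hfx⟩
  obtain ⟨f, hfx, hpf⟩ := p.exists_dual_map_eq_bot_of_notMem (hs x x.2) inferInstance
  have hfp : f ∈ p.dualAnnihilator :=
    (Submodule.mem_dualAnnihilator _).mpr fun w hw => LinearMap.le_ker_iff_map.mpr hpf hw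
  have : (⟨f, hfp⟩ : p.dualAnnihilator) ∈ H x := hx ▸ Submodule.mem_top
  exact hfx this

theorem notMem_span_image_of_finrank_eq_min {ι K V : Type*} [Field K] [AddCommGroup V]
    [Module K V] (a : ι → V) {N : ℕ}
    (hgen : ∀ s : Finset ι, Module.finrank K (Submodule.span K (a '' ↑s)) = min s.card N)
    {S : Finset ι} (hS : S.card < N) {j : ι} (hj : j ∉ S) : a j ∉ Submodule.span K (a '' ↑S) := by
  classical
  intro hspan
  have h := hgen (insert j S)
  rw [Finset.coe_insert, Set.image_insert_eq, Submodule.span_insert_eq_span hspan, hgen S,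
    Finset.card_insert_of_notMem hj] at h
  omega

theorem exists_dotProduct_eq_zero_iff {ι σ K : Type*} [Fintype ι] [Fintype σ] [Field K]
    [Infinite K] (a : ι → σ → K) (S : Finset ι)
    (hS : ∀ j ∉ S, a j ∉ Submodule.span K (a '' ↑S)) : ∃ p : σ → K, ∀ j, a j ⬝ᵥ p = 0 ↔ j ∈ S := by
  classical
  obtain ⟨f, hker, hne⟩ := (Submodule.span K (a '' ↑S)).exists_dual_le_ker_forall_ne_zero
    ((Finset.univ \ S).image a) (by simpa using hS)
  refine ⟨(dotProductEquiv K σ).symm f, fun j => ?_⟩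
  rw [dotProduct_comm, ← dotProductEquiv_apply_apply, LinearEquiv.apply_symm_apply]
  refine ⟨fun h => by_contra fun hj => hne _ (by simpa using ⟨j, hj, rfl⟩) h, fun hj => ?_⟩
  exact hker (Submodule.subset_span ⟨j, hj, rfl⟩)

theorem apol_prod_linearForm_eq_zero_of_apol_prod_eq_zero {σ ι K : Type*} [Fintype σ]
    [Fintype ι] [DecidableEq ι] [Field K] (a : ι → σ → K) {k : ℕ} {D : MvPolynomial σ K}
    (hD : D.IsHomogeneous k) (hf : apol D (∏ j, linearForm (a j)) = 0) {S : Finset ι}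
    (hS : S.card = k) {p : σ → K} (hp : ∀ j, a j ⬝ᵥ p = 0 ↔ j ∈ S) :
    apol D (∏ j ∈ S, linearForm (a j)) = 0 := by
  have hconst := totalDegree_eq_zero_iff_eq_C.mp <| (totalDegree_zero_iff_isHomogeneous σ).mpr <|
    by simpa [hS] using hD.apol (isHomogeneous_prod_linearForm a S)
  have heval := congrArg (eval p) (apol_prod_linearForm a hD Finset.univ)
  rw [hf, map_zero, map_sum, Finset.sum_eq_single S] at heval
  · rw [hconst, map_mul, eval_C, map_prod] at heval
    rw [hconst, zero_eq_mul.mp heval |>.resolve_right ?_, map_zero]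
    exact Finset.prod_ne_zero_iff.mpr fun j hj => by
      simpa [eval_linearForm, hp] using (Finset.mem_sdiff.mp hj).2
  · intro S' hS' hne
    obtain ⟨j, hjS, hjS'⟩ : ∃ j ∈ S, j ∉ S' := Finset.not_subset.mp fun h =>
      hne (Finset.eq_of_subset_of_card_le h (by simp_all)).symm
    rw [map_mul, map_prod]
    refine mul_eq_zero_of_right _ (Finset.prod_eq_zero (i := j) (by simpa using hjS') ?_)
    rw [eval_linearForm, hp]
    exact hjS
  · simp [hS]

theorem stmt9_general (K : Type*) [Field K] [CharZero K] (n r : ℕ)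
    (a : Fin r → Fin (n + 1) → K)
    (hgen : ∀ s : Finset (Fin r),
      Module.finrank K (Submodule.span K (a '' ↑s)) = min s.card (n + 1))
    (T : Finset (Fin r))
    (k : ℕ) (hk : k ≤ n)
    (hAnnh : ∀ D : MvPolynomial (Fin (n + 1)) K, D.IsHomogeneous k →
      apol D (∏ j ∈ T, ∑ i, C (a j i) * X i) = 0 → D = 0) :
    ∀ D : MvPolynomial (Fin (n + 1)) K, D.IsHomogeneous k →
      apol D (∏ j, ∑ i, C (a j i) * X i) = 0 → D = 0 := by
  intro D hD hf
  refine hAnnh D hD ?_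
  change apol D (∏ j ∈ T, linearForm (a j)) = 0
  rw [apol_prod_linearForm a hD T]
  refine Finset.sum_eq_zero fun S hS => ?_
  have hSk : S.card = k := (Finset.mem_powersetCard.mp hS).2
  obtain ⟨p, hp⟩ := exists_dotProduct_eq_zero_iff a S fun j hj =>
    notMem_span_image_of_finrank_eq_min a hgen (by omega) hj
  rw [apol_prod_linearForm_eq_zero_of_apol_prod_eq_zero a hD hf hSk hp, zero_mul]

/-- Propagation of vanishing of graded pieces of apolar ideals for generic arrangements:
if `f = gh` is a product of ≥ n+2 distinct linear forms forming a generic arrangement,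
`deg h ≥ n+1`, and `Ann(h)_k = 0` for some `k ≤ n`, then `Ann(f)_k = 0`. -/
theorem stmt9 (K : Type*) [Field K] [CharZero K] [IsAlgClosed K] (n r : ℕ)
    (hr : n + 2 ≤ r) (a : Fin r → Fin (n + 1) → K) (ha : ∀ j, a j ≠ 0)
    (hdist : ∀ j j' : Fin r, j ≠ j' → ∀ c : K, a j ≠ c • a j')
    (hgen : ∀ s : Finset (Fin r),
      Module.finrank K (Submodule.span K (a '' ↑s)) = min s.card (n + 1))
    (T : Finset (Fin r)) (hT : n + 1 ≤ T.card)
    (k : ℕ) (hk : k ≤ n)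
    (hAnnh : ∀ D : MvPolynomial (Fin (n + 1)) K, D.IsHomogeneous k →
      apol D (∏ j ∈ T, ∑ i, C (a j i) * X i) = 0 → D = 0) :
    ∀ D : MvPolynomial (Fin (n + 1)) K, D.IsHomogeneous k →
      apol D (∏ j, ∑ i, C (a j i) * X i) = 0 → D = 0 :=
  stmt9_general K n r a hgen T k hk hAnnh
end

section
/- If an arrangement A in P^2 is irreducible (not a product of lower-dimensional arrangements after any linear change of coordinates), then its defining polynomial has four factors, no three of which are linearly dependent; consequently there is a linear change of variables so that Q(A) = xyz(x+y+z)ℓ_1⋯ℓ_t for some linear forms ℓ_i. -/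
/-!
Since an arrangement whose linear forms span a proper subspace is reducible, three of the forms
are independent; change coordinates so that they become `x₀, x₁, x₂`. Every other form has at
most one vanishing coordinate, because two would make it a multiple of a coordinate form. A form
with no vanishing coordinate makes, with `x₀, x₁, x₂`, four forms no three of which are
dependent. Otherwise, if all the other forms vanish on the same coordinate `m`, the arrangement
splits off `x_m`; and if two of them vanish on different coordinates `m ≠ m'`, these two
together with `x_m, x_{m'}` are four forms no three of which are dependent. Finally, rescaling
the coordinates moves four such forms to `x₀, x₁, x₂, x₀ + x₁ + x₂`.
-/

/-- An arrangement of lines in ℙ², given by coefficient vectors `a j` of its defining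
linear forms, is reducible if after an invertible linear change of coordinates each
defining linear form involves only variables from a nontrivial subset `S` of the
coordinates or only variables from its complement. -/
def ArrReducible {K : Type*} [Field K] {r : ℕ} (a : Fin r → Fin 3 → K) : Prop :=
  ∃ M : Matrix (Fin 3) (Fin 3) K, IsUnit M.det ∧
    ∃ S : Finset (Fin 3), S.Nonempty ∧ S ≠ Finset.univ ∧
      ∀ j : Fin r, (∀ i ∉ S, Matrix.vecMul (a j) M i = 0) ∨
        (∀ i ∈ S, Matrix.vecMul (a j) M i = 0)

open Matrix

def IsProjectiveFrame (K : Type*) {V : Type*} [Field K] [AddCommGroup V] [Module K V]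
    (v : Fin 4 → V) : Prop :=
  ∀ i : Fin 4, LinearIndependent K (v ∘ i.succAbove)

section LinearAlgebra

variable {K V W : Type*} [Field K] [AddCommGroup V] [Module K V] [AddCommGroup W] [Module K W]

lemma exists_linearIndependent_fin_of_span_eq_top [FiniteDimensional K V] {ι : Type*} {n : ℕ}
    (hn : Module.finrank K V = n) (v : ι → V) (hv : Submodule.span K (Set.range v) = ⊤) :
    ∃ t : Fin n → ι, LinearIndependent K (v ∘ t) := by
  obtain ⟨κ, f, -, hspan, hli⟩ := exists_linearIndependent' K v
  let e := (Module.finBasisOfFinrankEq K V hn).indexEquiv (.mk hli (by rw [hspan, hv]))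
  exact ⟨f ∘ e, hli.comp e e.injective⟩

lemma row_vecMul_nonsing_inv {n : Type*} [Fintype n] [DecidableEq n] {A : Matrix n n K}
    (hA : IsUnit A) (i : n) : A i ᵥ* A⁻¹ = Pi.single i 1 := by
  ext j
  rw [← mul_apply_eq_vecMul, mul_nonsing_inv _ ((isUnit_iff_isUnit_det _).mp hA),
    one_eq_pi_single]

variable {v : Fin 4 → V}

lemma IsProjectiveFrame.injective (h : IsProjectiveFrame K v) : Function.Injective v := by
  intro x y hxy
  by_contra hne
  obtain ⟨k, hkx, hky⟩ : ∃ k : Fin 4, k ≠ x ∧ k ≠ y := by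
    clear hxy hne
    revert x y
    decide
  obtain ⟨p, rfl⟩ := Fin.exists_succAbove_eq hkx.symm
  obtain ⟨q, rfl⟩ := Fin.exists_succAbove_eq hky.symm
  exact hne (congrArg _ ((h k).injective hxy))

lemma IsProjectiveFrame.linearIndependent_of_card_eq_three (h : IsProjectiveFrame K v)
    {s : Finset (Fin 4)} (hs : s.card = 3) : LinearIndependent K fun m : s => v m := by
  obtain ⟨i, hi⟩ := Finset.card_eq_one.mp (by rw [Finset.card_compl, hs]; rfl : sᶜ.card = 1)
  have hsi : (s : Set (Fin 4)) = Set.range i.succAbove := by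
    rw [Fin.range_succAbove, ← Finset.coe_singleton, ← hi, Finset.coe_compl, compl_compl]
  change LinearIndepOn K v (s : Set (Fin 4))
  rw [hsi, linearIndepOn_range_iff Fin.succAbove_right_injective]
  exact h i

lemma isProjectiveFrame_comp_iff {f : V →ₗ[K] W} (hf : Function.Injective f) :
    IsProjectiveFrame K (f ∘ v) ↔ IsProjectiveFrame K v :=
  forall_congr' fun _ => f.linearIndependent_iff_of_injOn hf.injOn

end LinearAlgebra

section Plane

variable {K : Type*} [Field K]

lemma isProjectiveFrame_iff_det (v : Fin 4 → Fin 3 → K) :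
    IsProjectiveFrame K v ↔ ∀ i : Fin 4, (of (v ∘ i.succAbove)).det ≠ 0 := by
  simp only [IsProjectiveFrame, ← isUnit_iff_ne_zero, ← isUnit_iff_isUnit_det,
    ← linearIndependent_rows_iff_isUnit]
  rfl

lemma isProjectiveFrame_single_iff (d : Fin 3 → K) :
    IsProjectiveFrame K ![Pi.single 0 1, Pi.single 1 1, Pi.single 2 1, d] ↔ ∀ i, d i ≠ 0 := by
  simp [isProjectiveFrame_iff_det, Fin.forall_fin_succ, det_fin_three, Fin.succAbove]

lemma isProjectiveFrame_single_single {m m' : Fin 3} (hmm' : m ≠ m') {v w : Fin 3 → K}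
    (hv : ∀ i, v i = 0 ↔ i = m) (hw : ∀ i, w i = 0 ↔ i = m') :
    IsProjectiveFrame K ![Pi.single m 1, Pi.single m' 1, v, w] := by
  rw [isProjectiveFrame_iff_det]
  fin_cases m <;> fin_cases m' <;> simp_all [det_fin_three, Fin.forall_fin_succ, Fin.succAbove]

lemma exists_eq_smul_single_of_apply_eq_zero {v : Fin 3 → K} {m m' : Fin 3} (hmm' : m ≠ m')
    (hm : v m = 0) (hm' : v m' = 0) : ∃ (m'' : Fin 3) (c : K), v = c • Pi.single m'' 1 := by
  obtain ⟨m'', hm''⟩ : ∃ m'', ∀ i, i = m ∨ i = m' ∨ i = m'' := by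
    clear hm hm'
    revert m m'
    decide
  refine ⟨m'', v m'', funext fun i => ?_⟩
  by_cases hi : i = m''
  · simp [hi]
  · rw [Pi.smul_apply, Pi.single_eq_of_ne hi, smul_zero]
    rcases hm'' i with rfl | rfl | h
    exacts [hm, hm', absurd h hi]

lemma IsProjectiveFrame.exists_vecMul_eq {v : Fin 4 → Fin 3 → K} (h : IsProjectiveFrame K v) :
    ∃ M : Matrix (Fin 3) (Fin 3) K, IsUnit M.det ∧
      ∃ c : Fin 4 → K, (∀ m, c m ≠ 0) ∧
        v 0 ᵥ* M = c 0 • Pi.single 0 1 ∧ v 1 ᵥ* M = c 1 • Pi.single 1 1 ∧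
        v 2 ᵥ* M = c 2 • Pi.single 2 1 ∧ v 3 ᵥ* M = c 3 • 1 := by
  set B := of (v ∘ Fin.castSucc)
  have hB : IsUnit B := by
    have hli := h (Fin.last 3)
    rw [Fin.succAbove_last] at hli
    exact linearIndependent_rows_iff_isUnit.mp hli
  have hBinj : Function.Injective (vecMulLinear B⁻¹) :=
    vecMul_injective_of_isUnit (isUnit_nonsing_inv_iff.mpr hB)
  set d := v 3 ᵥ* B⁻¹
  obtain ⟨h0, h1, h2⟩ : v 0 ᵥ* B⁻¹ = Pi.single 0 1 ∧ v 1 ᵥ* B⁻¹ = Pi.single 1 1 ∧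
      v 2 ᵥ* B⁻¹ = Pi.single 2 1 :=
    ⟨row_vecMul_nonsing_inv hB 0, row_vecMul_nonsing_inv hB 1, row_vecMul_nonsing_inv hB 2⟩
  have hd : ∀ i, d i ≠ 0 := by
    rw [← isProjectiveFrame_single_iff]
    convert (isProjectiveFrame_comp_iff hBinj).mpr h using 1
    ext i : 1
    fin_cases i <;> simp [h0, h1, h2, d]
  refine ⟨B⁻¹ * diagonal fun i => (d i)⁻¹, ?_, ![(d 0)⁻¹, (d 1)⁻¹, (d 2)⁻¹, 1], ?_, ?_⟩
  · rw [det_mul, det_diagonal]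
    exact (isUnit_nonsing_inv_det B ((isUnit_iff_isUnit_det B).mp hB)).mul
      (Finset.prod_ne_zero_iff.mpr fun i _ => inv_ne_zero (hd i)).isUnit
  · intro m
    fin_cases m <;> simp [hd]
  · simp only [← vecMul_vecMul, h0, h1, h2, single_vecMul_diagonal]
    refine ⟨?_, ?_, ?_, ?_⟩
    all_goals ext i; simp [vecMul_diagonal, Pi.single_apply, hd, d]

variable {r : ℕ} {a : Fin r → Fin 3 → K}

lemma ArrReducible.of_vecMul {N : Matrix (Fin 3) (Fin 3) K} (hN : IsUnit N.det)
    (h : ArrReducible fun j => a j ᵥ* N) : ArrReducible a := by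
  obtain ⟨M, hM, S, hS, hSu, hj⟩ := h
  refine ⟨N * M, by simpa [det_mul] using hN.mul hM, S, hS, hSu, fun j => ?_⟩
  simpa only [vecMul_vecMul] using hj j

lemma arrReducible_of_forall_apply_eq_zero_or (m : Fin 3)
    (h : ∀ j, a j m = 0 ∨ ∀ i ≠ m, a j i = 0) : ArrReducible a :=
  ⟨1, by simp, {m}ᶜ, ⟨m + 1, by simp⟩, by simp, by simpa using h⟩

lemma arrReducible_of_span_lt_top (h : Submodule.span K (Set.range a) < ⊤) : ArrReducible a := by
  obtain ⟨f, hf, hle⟩ := Submodule.exists_le_ker_of_lt_top _ h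
  set v := (dotProductEquiv K (Fin 3)).symm f
  have hv : ∀ j, v ⬝ᵥ a j = 0 := fun j => by
    rw [← dotProductEquiv_apply_apply, LinearEquiv.apply_symm_apply]
    exact hle (Submodule.subset_span ⟨j, rfl⟩)
  obtain ⟨m, hm⟩ := Function.ne_iff.mp
    ((LinearEquiv.map_ne_zero_iff (dotProductEquiv K (Fin 3)).symm).mpr hf)
  have hdet : (updateCol 1 m v).det = v m := by rw [← cramer_apply, cramer_one]; rfl
  refine .of_vecMul (N := updateCol 1 m v) (by rw [hdet]; exact hm.isUnit) ?_
  refine arrReducible_of_forall_apply_eq_zero_or m fun j => .inl ?_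
  simpa [vecMul, dotProduct_comm] using hv j

lemma exists_isProjectiveFrame_of_apply_eq_single (t : Fin 3 → Fin r)
    (ht : ∀ m, a (t m) = Pi.single m 1)
    (hdist : ∀ j j' : Fin r, j ≠ j' → ∀ c : K, a j ≠ c • a j') (hirr : ¬ ArrReducible a) :
    ∃ j : Fin 4 → Fin r, IsProjectiveFrame K (a ∘ j) := by
  by_contra! hno
  have hzero : ∀ k, (∀ m, t m ≠ k) → ∃ m, ∀ i, a k i = 0 ↔ i = m := by
    intro k hk
    obtain ⟨m, hm⟩ : ∃ m, a k m = 0 := by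
      by_contra! h
      apply hno ![t 0, t 1, t 2, k]
      convert (isProjectiveFrame_single_iff (a k)).mpr h using 1
      ext i : 1
      fin_cases i <;> simp [ht]
    refine ⟨m, fun i => ⟨fun hi => ?_, fun hi => hi ▸ hm⟩⟩
    by_contra him
    obtain ⟨m'', c, hc⟩ := exists_eq_smul_single_of_apply_eq_zero him hi hm
    exact hdist k (t m'') (hk m'').symm c (by rw [hc, ht])
  obtain ⟨m₀, hm₀⟩ : ∃ m₀, ∀ k, (∀ m, t m ≠ k) → a k m₀ = 0 := by
    by_contra! h
    obtain ⟨k, hk, -⟩ := h 0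
    obtain ⟨m, hm⟩ := hzero k hk
    obtain ⟨k', hk', hk'm⟩ := h m
    obtain ⟨m', hm'⟩ := hzero k' hk'
    apply hno ![t m, t m', k, k']
    convert isProjectiveFrame_single_single (fun h => hk'm ((hm' m).mpr h)) hm hm' using 1
    ext i : 1
    fin_cases i <;> simp [ht]
  refine hirr (arrReducible_of_forall_apply_eq_zero_or m₀ fun k => ?_)
  by_cases hk : ∃ m, t m = k
  · obtain ⟨m, rfl⟩ := hk
    rw [ht]
    by_cases hm : m = m₀
    · subst hm
      exact .inr fun i hi => Pi.single_eq_of_ne hi _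
    · exact .inl (Pi.single_eq_of_ne' hm _)
  · exact .inl (hm₀ k fun m hm => hk ⟨m, hm⟩)

lemma exists_isProjectiveFrame_of_not_arrReducible
    (hdist : ∀ j j' : Fin r, j ≠ j' → ∀ c : K, a j ≠ c • a j') (hirr : ¬ ArrReducible a) :
    ∃ j : Fin 4 → Fin r, IsProjectiveFrame K (a ∘ j) := by
  have hspan : Submodule.span K (Set.range a) = ⊤ := by
    by_contra h
    exact hirr (arrReducible_of_span_lt_top (lt_top_iff_ne_top.mpr h))
  obtain ⟨t, ht⟩ := exists_linearIndependent_fin_of_span_eq_top (Module.finrank_fin_fun K) a hspan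
  set B := of (a ∘ t)
  have hB : IsUnit B := linearIndependent_rows_iff_isUnit.mp ht
  have hBinj : Function.Injective (vecMulLinear B⁻¹) :=
    vecMul_injective_of_isUnit (isUnit_nonsing_inv_iff.mpr hB)
  obtain ⟨j, hj⟩ := exists_isProjectiveFrame_of_apply_eq_single (a := fun k => a k ᵥ* B⁻¹) t
    (row_vecMul_nonsing_inv hB)
    (fun k k' hkk' c h => hdist k k' hkk' c (hBinj (by simpa [smul_vecMul] using h)))
    (fun h => hirr (h.of_vecMul (isUnit_nonsing_inv_det B ((isUnit_iff_isUnit_det B).mp hB))))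
  exact ⟨j, (isProjectiveFrame_comp_iff hBinj).mp hj⟩

end Plane

theorem stmt13_general (K : Type*) [Field K] (r : ℕ)
    (a : Fin r → Fin 3 → K)
    (hdist : ∀ j j' : Fin r, j ≠ j' → ∀ c : K, a j ≠ c • a j')
    (hirr : ¬ ArrReducible a) :
    ∃ j : Fin 4 → Fin r, Function.Injective j ∧
      (∀ s : Finset (Fin 4), s.card = 3 →
        LinearIndependent K fun m : s => a (j m.1)) ∧
      ∃ M : Matrix (Fin 3) (Fin 3) K, IsUnit M.det ∧
        ∃ c : Fin 4 → K, (∀ m, c m ≠ 0) ∧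
          Matrix.vecMul (a (j 0)) M = c 0 • (Pi.single (0 : Fin 3) (1 : K) : Fin 3 → K) ∧
          Matrix.vecMul (a (j 1)) M = c 1 • (Pi.single (1 : Fin 3) (1 : K) : Fin 3 → K) ∧
          Matrix.vecMul (a (j 2)) M = c 2 • (Pi.single (2 : Fin 3) (1 : K) : Fin 3 → K) ∧
          Matrix.vecMul (a (j 3)) M = c 3 • (fun _ : Fin 3 => (1 : K)) := by
  obtain ⟨j, hj⟩ := exists_isProjectiveFrame_of_not_arrReducible hdist hirr
  exact ⟨j, hj.injective.of_comp, fun s => hj.linearIndependent_of_card_eq_three,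
    hj.exists_vecMul_eq⟩

/-- An irreducible arrangement in ℙ² has four defining linear forms no three of which
are linearly dependent; consequently after a linear change of variables its defining
polynomial has the form `xyz(x+y+z)·ℓ₁⋯ℓ_t`. -/
theorem stmt13 (K : Type*) [Field K] [CharZero K] [IsAlgClosed K] (r : ℕ)
    (a : Fin r → Fin 3 → K) (ha : ∀ j, a j ≠ 0)
    (hdist : ∀ j j' : Fin r, j ≠ j' → ∀ c : K, a j ≠ c • a j')
    (hirr : ¬ ArrReducible a) :
    ∃ j : Fin 4 → Fin r, Function.Injective j ∧
      (∀ s : Finset (Fin 4), s.card = 3 →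
        LinearIndependent K fun m : s => a (j m.1)) ∧
      ∃ M : Matrix (Fin 3) (Fin 3) K, IsUnit M.det ∧
        ∃ c : Fin 4 → K, (∀ m, c m ≠ 0) ∧
          Matrix.vecMul (a (j 0)) M = c 0 • (Pi.single (0 : Fin 3) (1 : K) : Fin 3 → K) ∧
          Matrix.vecMul (a (j 1)) M = c 1 • (Pi.single (1 : Fin 3) (1 : K) : Fin 3 → K) ∧
          Matrix.vecMul (a (j 2)) M = c 2 • (Pi.single (2 : Fin 3) (1 : K) : Fin 3 → K) ∧
          Matrix.vecMul (a (j 3)) M = c 3 • (fun _ : Fin 3 => (1 : K)) :=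
  stmt13_general K r a hdist hirr
end

section
/- Let f_1 = xyz(x+y+z)(x+αy+ᾱz)(x+ᾱy+αz) with α = exp(2πi/3), and let ℓ_1 = αx+y+z, ℓ_2 = ᾱx+y+z, ℓ_3 = x+αy+z, ℓ_4 = x+ᾱy+z, ℓ_5 = x+y+αz, ℓ_6 = x+y+ᾱz. Then f_1 = ((2α+1)/270)·(−ℓ_1⁶+ℓ_2⁶−ℓ_3⁶+ℓ_4⁶−ℓ_5⁶+ℓ_6⁶); in particular f_1 has Waring rank at most 6. -/
/-!
Since `α² + α + 1 = 0` and `ᾱ = α²`, the cubic `(x + y + z)(x + αy + ᾱz)(x + ᾱy + αz)` is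
`x³ + y³ + z³ - 3xyz`. In `(α²a + b)⁶ - (αa + b)⁶` the binomial terms with exponent of `a` divisible by 3 cancel, and the
others carry the common factor `α² - α`. Summing the three such differences (with `a` running over
`x, y, z` and `b` the sum of the other two) gives `90 (α² - α) xyz (x³ + y³ + z³ - 3xyz)`, and
`(2α + 1)(α² - α) = 3`.
-/

open MvPolynomial

section CubeRootOfUnity

variable {R : Type*} [CommRing R] {ω : R}

theorem IsPrimitiveRoot.sq_add_self_add_one [IsDomain R] (hω : IsPrimitiveRoot ω 3) :
    ω ^ 2 + ω + 1 = 0 := by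
  have h := hω.geom_sum_eq_zero (by norm_num)
  simp only [Finset.sum_range_succ, Finset.sum_range_zero] at h
  linear_combination h

theorem mul_add_mul_add_mul_eq_sum_cubes (hω : ω ^ 2 + ω + 1 = 0) (x y z : R) :
    (x + y + z) * (x + ω * y + ω ^ 2 * z) * (x + ω ^ 2 * y + ω * z) =
      x ^ 3 + y ^ 3 + z ^ 3 - 3 * x * y * z := by
  linear_combination
    (x + y + z) * (x * y + x * z + (ω - 1) * (y ^ 2 + z ^ 2) + (ω ^ 2 - ω + 1) * y * z) * hω

theorem sq_mul_add_pow_six_sub_mul_add_pow_six (hω : ω ^ 2 + ω + 1 = 0) (a b : R) :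
    (ω ^ 2 * a + b) ^ 6 - (ω * a + b) ^ 6 =
      (ω ^ 2 - ω) * (6 * a * b ^ 5 - 15 * a ^ 2 * b ^ 4 + 15 * a ^ 4 * b ^ 2 - 6 * a ^ 5 * b) := by
  linear_combination (ω - 1) * (15 * a ^ 2 * b ^ 4 * ω + 20 * a ^ 3 * b ^ 3 * ω ^ 3
    + 15 * a ^ 4 * b ^ 2 * (ω ^ 2 * (ω ^ 3 + 1) - ω)
    + 6 * a ^ 5 * b * (ω * (ω ^ 6 + ω ^ 3 + 1) - ω ^ 2) + a ^ 6 * ω ^ 6 * (ω ^ 3 + 1)) * hω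

theorem alternating_sum_pow_six_eq (hω : ω ^ 2 + ω + 1 = 0) (x y z : R) :
    -(ω * x + y + z) ^ 6 + (ω ^ 2 * x + y + z) ^ 6 - (x + ω * y + z) ^ 6
        + (x + ω ^ 2 * y + z) ^ 6 - (x + y + ω * z) ^ 6 + (x + y + ω ^ 2 * z) ^ 6 =
      90 * (ω ^ 2 - ω) *
        (x * y * z * (x + y + z) * (x + ω * y + ω ^ 2 * z) * (x + ω ^ 2 * y + ω * z)) := by
  linear_combination sq_mul_add_pow_six_sub_mul_add_pow_six hω x (y + z)
    + sq_mul_add_pow_six_sub_mul_add_pow_six hω y (x + z)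
    + sq_mul_add_pow_six_sub_mul_add_pow_six hω z (x + y)
    - 90 * (ω ^ 2 - ω) * x * y * z * mul_add_mul_add_mul_eq_sum_cubes hω x y z

end CubeRootOfUnity

theorem IsPrimitiveRoot.conj_eq_sq {ζ : ℂ} (hζ : IsPrimitiveRoot ζ 3) :
    (starRingEnd ℂ) ζ = ζ ^ 2 := by
  rw [← Complex.inv_eq_conj (hζ.norm'_eq_one three_ne_zero), inv_eq_of_mul_eq_one_right]
  rw [← pow_succ', hζ.pow_eq_one]

/-- Explicit Waring decomposition of `f₁ = xyz(x+y+z)(x+αy+ᾱz)(x+ᾱy+αz)`,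
`α = exp(2πi/3)`, as a combination of six sixth powers of linear forms; in particular
`f₁` has Waring rank at most 6. -/
theorem stmt16 :
    let α : ℂ := Complex.exp (2 * Real.pi * Complex.I / 3)
    let ac : ℂ := (starRingEnd ℂ) α
    let f₁ : MvPolynomial (Fin 3) ℂ :=
      X 0 * X 1 * X 2 * (X 0 + X 1 + X 2) *
        (X 0 + C α * X 1 + C ac * X 2) * (X 0 + C ac * X 1 + C α * X 2)
    let ℓ₁ : MvPolynomial (Fin 3) ℂ := C α * X 0 + X 1 + X 2
    let ℓ₂ : MvPolynomial (Fin 3) ℂ := C ac * X 0 + X 1 + X 2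
    let ℓ₃ : MvPolynomial (Fin 3) ℂ := X 0 + C α * X 1 + X 2
    let ℓ₄ : MvPolynomial (Fin 3) ℂ := X 0 + C ac * X 1 + X 2
    let ℓ₅ : MvPolynomial (Fin 3) ℂ := X 0 + X 1 + C α * X 2
    let ℓ₆ : MvPolynomial (Fin 3) ℂ := X 0 + X 1 + C ac * X 2
    f₁ = C ((2 * α + 1) / 270) *
        (-ℓ₁ ^ 6 + ℓ₂ ^ 6 - ℓ₃ ^ 6 + ℓ₄ ^ 6 - ℓ₅ ^ 6 + ℓ₆ ^ 6) ∧
    ∃ (c : Fin 6 → ℂ) (b : Fin 6 → Fin 3 → ℂ),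
      f₁ = ∑ j, c j • (∑ i, C (b j i) * X i) ^ 6 := by
  intro α ac f₁ ℓ₁ ℓ₂ ℓ₃ ℓ₄ ℓ₅ ℓ₆
  have hα : IsPrimitiveRoot α 3 := by
    simpa only [Nat.cast_ofNat] using Complex.isPrimitiveRoot_exp 3 (by norm_num)
  have hα₂ := hα.sq_add_self_add_one
  have hscalar : (2 * α + 1) / 270 * (90 * (α ^ 2 - α)) = 1 := by
    linear_combination (2 * α - 3) / 3 * hα₂
  have key : f₁ = C ((2 * α + 1) / 270) *
      (-ℓ₁ ^ 6 + ℓ₂ ^ 6 - ℓ₃ ^ 6 + ℓ₄ ^ 6 - ℓ₅ ^ 6 + ℓ₆ ^ 6) := by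
    have hC := congrArg (C : ℂ → MvPolynomial (Fin 3) ℂ) hα₂
    simp only [map_add, map_pow, map_one, map_zero] at hC
    simp only [f₁, ℓ₁, ℓ₂, ℓ₃, ℓ₄, ℓ₅, ℓ₆, ac, hα.conj_eq_sq, map_pow,
      alternating_sum_pow_six_eq hC]
    rw [← mul_assoc, ← map_ofNat C, ← map_pow, ← map_sub, ← map_mul, ← map_mul, hscalar, map_one,
      one_mul]
  refine ⟨key, ![-((2 * α + 1) / 270), (2 * α + 1) / 270, -((2 * α + 1) / 270),
      (2 * α + 1) / 270, -((2 * α + 1) / 270), (2 * α + 1) / 270],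
    ![![α, 1, 1], ![ac, 1, 1], ![1, α, 1], ![1, ac, 1], ![1, 1, α], ![1, 1, ac]], ?_⟩
  rw [key]
  simp only [Fin.sum_univ_six, Fin.sum_univ_three, smul_eq_C_mul, Matrix.cons_val, C_neg, C_1,
    ℓ₁, ℓ₂, ℓ₃, ℓ₄, ℓ₅, ℓ₆]
  ring
end
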